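/- In the parallel composition extended with wildcard receives, an SR* action (a send matched with a wildcard receive) enabled at a global state σ can be disabled by executing another action enabled at σ only if that other action is also an SR* action sharing the same wildcard-receiving process; in particular, non-wildcard SR actions and B actions never disable any co-enabled SR* action. -/

import Mathlib

/-- Local actions of an MPI process: send to a specific destination, receive
from a specific source, wildcard receive (from any source), or barrier. -/
inductive WAct (n : ℕ) where
  | send (dest : Fin n)
  | recv (src : Fin n)
  | recvAny
  | barrier
deriving DecidableEq

/-- Global actions of the parallel composition with wildcard receives:
`B` (global barrier), `SR i j` (send from `i` matched with the specific
receive at `j`), and `SRW i j` (send from `i` matched with the wildcard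
receive at `j`). -/
inductive WGAct (n : ℕ) where
  | B
  | SR (i j : Fin n)
  | SRW (i j : Fin n)
deriving DecidableEq

variable {n : ℕ} {L : Fin n → Type}

/-- Enabledness of global actions in a global state `σ` (an `n`-tuple of local
states), where `next i` gives the unique next local action of deterministic
process `i` (`none` = terminated). -/
def WEnabled (next : ∀ i, L i → Option (WAct n)) (σ : ∀ i, L i) : WGAct n → Prop
  | .B => ∀ i, next i (σ i) = some .barrier
  | .SR i j => i ≠ j ∧ next i (σ i) = some (.send j) ∧ next j (σ j) = some (.recv i)
  | .SRW i j => i ≠ j ∧ next i (σ i) = some (.send j) ∧ next j (σ j) = some .recvAny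

open scoped Classical in
/-- The global step function: `B` advances all components, while `SR i j` and
`SRW i j` advance exactly components `i` and `j`. -/
noncomputable def wstep (next : ∀ i, L i → Option (WAct n)) (adv : ∀ i, L i → L i) :
    WGAct n → (∀ i, L i) → Option (∀ i, L i)
  | .B, σ => if WEnabled next σ .B then some (fun k => adv k (σ k)) else none
  | .SR i j, σ =>
      if WEnabled next σ (.SR i j) then
        some (Function.update (Function.update σ i (adv i (σ i))) j (adv j (σ j)))
      else none
  | .SRW i j, σ =>
      if WEnabled next σ (.SRW i j) then
        some (Function.update (Function.update σ i (adv i (σ i))) j (adv j (σ j)))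
      else none

/-! Since every process has a unique next local action, an action co-enabled with `SRW i j`
is either `SRW _ j` or involves neither `i` nor `j` (a barrier is never co-enabled, as `i` is
about to send). `SR` and `SRW` steps move only their two participants, so the latter kind of
action leaves the states of `i` and `j`, and hence `SRW i j`, enabled. -/

section Disabling

variable {next : ∀ i, L i → Option (WAct n)} {adv : ∀ i, L i → L i} {σ σ' : ∀ i, L i}
  {i j a b k : Fin n}

theorem WEnabled.SRW_of_eq (h : WEnabled next σ (.SRW i j)) (hi : σ' i = σ i)
    (hj : σ' j = σ j) : WEnabled next σ' (.SRW i j) := by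
  obtain ⟨hij, hsend, hrecv⟩ := h
  exact ⟨hij, hi ▸ hsend, hj ▸ hrecv⟩

theorem WEnabled.not_B_of_SRW (h : WEnabled next σ (.SRW i j)) : ¬ WEnabled next σ .B :=
  fun hB => by simpa [h.2.1] using hB i

theorem WEnabled.SR_ne_of_SRW (h : WEnabled next σ (.SRW i j)) (h' : WEnabled next σ (.SR a b)) :
    i ≠ a ∧ j ≠ a ∧ i ≠ b ∧ j ≠ b := by
  obtain ⟨-, hi, hj⟩ := h
  obtain ⟨-, ha, hb⟩ := h'
  refine ⟨?_, ?_, ?_, ?_⟩ <;> rintro rfl <;> grind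

theorem WEnabled.SRW_ne_of_SRW (h : WEnabled next σ (.SRW i j))
    (h' : WEnabled next σ (.SRW a b)) (hb : j ≠ b) : i ≠ a ∧ j ≠ a ∧ i ≠ b := by
  obtain ⟨-, hi, hj⟩ := h
  obtain ⟨-, ha, hb'⟩ := h'
  refine ⟨?_, ?_, ?_⟩ <;> rintro rfl <;> grind

theorem wstep_SR_apply_of_ne (h : wstep next adv (.SR a b) σ = some σ') (ha : k ≠ a)
    (hb : k ≠ b) : σ' k = σ k := by
  simp only [wstep] at h
  split_ifs at h
  cases h
  simp [Function.update_of_ne, ha, hb]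

theorem wstep_SRW_apply_of_ne (h : wstep next adv (.SRW a b) σ = some σ') (ha : k ≠ a)
    (hb : k ≠ b) : σ' k = σ k := by
  simp only [wstep] at h
  split_ifs at h
  cases h
  simp [Function.update_of_ne, ha, hb]

end Disabling

/-- an `SRW i j` action (send matched with a wildcard receive at
`j`) enabled at `σ` can be disabled by executing another action enabled at `σ`
only if that action is also an `SRW` action with the same wildcard-receiving
process `j`; in particular, non-wildcard `SR` actions and `B` never disable a
co-enabled `SRW` action. -/
theorem stmt13 (next : ∀ i, L i → Option (WAct n)) (adv : ∀ i, L i → L i)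
    (σ : ∀ i, L i) (i j : Fin n) (g : WGAct n)
    (hsrw : WEnabled next σ (.SRW i j))
    (hg : WEnabled next σ g)
    (hdisable : ∃ σ', wstep next adv g σ = some σ' ∧ ¬ WEnabled next σ' (.SRW i j)) :
    ∃ i' : Fin n, g = .SRW i' j := by
  obtain ⟨σ', hstep, hdisabled⟩ := hdisable
  cases g with
  | B => exact absurd hg hsrw.not_B_of_SRW
  | SR a b =>
    obtain ⟨hia, hja, hib, hjb⟩ := hsrw.SR_ne_of_SRW hg
    exact absurd (hsrw.SRW_of_eq (wstep_SR_apply_of_ne hstep hia hib)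
      (wstep_SR_apply_of_ne hstep hja hjb)) hdisabled
  | SRW a b =>
    by_cases hjb : j = b
    · exact ⟨a, hjb ▸ rfl⟩
    obtain ⟨hia, hja, hib⟩ := hsrw.SRW_ne_of_SRW hg hjb
    exact absurd (hsrw.SRW_of_eq (wstep_SRW_apply_of_ne hstep hia hib)
      (wstep_SRW_apply_of_ne hstep hja hjb)) hdisabled
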